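/- For any bi-infinite sequence (a_i) ∈ {1,2,3,4}^ℤ with Markov value m((a_i)) < 4.528, the sequence cannot contain the subword 3,3,4 nor its transpose 4,3,3. -/

import Mathlib

/-!
Cutting both continued fractions in `λₘ = aₘ + [0; aₘ₋₁, aₘ₋₂, …] + [0; aₘ₊₁, aₘ₊₂, …]`
off after two partial quotients gives the lower bound
`aₘ + 1/(aₘ₋₁ + 1/aₘ₋₂) + 1/(aₘ₊₁ + 1/aₘ₊₂) ≤ λₘ`; the rest is arithmetic with digits in
`{1,2,3,4}`. A `4` followed by a `1` or a `2` gives `λ ≥ 4 + 1/5 + 1/3 > 4.528`. At the `4`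
of `3,3,4,x` the left side contributes `1/(3 + 1/3) = 3/10`; if `x ≤ 3` the right side
contributes at least `1/4`, and if `x = 4` the digit after it is at least `3`, so the right
side contributes at least `1/(4 + 1/3) = 3/13`; both exceed `0.228`. The transpose `4,3,3` is
the same word in the reversed sequence, whose truncated `λ`s are those of the original one.
-/

/-- Continued fraction numerators: `(cfP a n).1 = pₙ`, `(cfP a n).2 = pₙ₋₁`,
with `p₋₁ = 1`, `p₀ = a₀`, `pₙ₊₁ = aₙ₊₁ pₙ + pₙ₋₁`. -/
noncomputable def cfP (a : ℕ → ℝ) : ℕ → ℝ × ℝ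
  | 0 => (a 0, 1)
  | n + 1 => (a (n + 1) * (cfP a n).1 + (cfP a n).2, (cfP a n).1)

/-- Continued fraction denominators: `(cfQ a n).1 = qₙ`, `(cfQ a n).2 = qₙ₋₁`,
with `q₋₁ = 0`, `q₀ = 1`, `qₙ₊₁ = aₙ₊₁ qₙ + qₙ₋₁`. -/
noncomputable def cfQ (a : ℕ → ℝ) : ℕ → ℝ × ℝ
  | 0 => (1, 0)
  | n + 1 => (a (n + 1) * (cfQ a n).1 + (cfQ a n).2, (cfQ a n).1)

/-- The `n`-th convergent `[a₀; a₁, …, aₙ] = pₙ/qₙ` of the continued fraction with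
partial quotients `a`. -/
noncomputable def cfConv (a : ℕ → ℝ) (n : ℕ) : ℝ := (cfP a n).1 / (cfQ a n).1

/-- `x` is the value of the infinite continued fraction `[a₀; a₁, a₂, …]`, i.e. the limit
of its convergents. -/
def IsCFVal (a : ℕ → ℝ) (x : ℝ) : Prop :=
  Filter.Tendsto (cfConv a) Filter.atTop (nhds x)

/-- `lam n` is `λₙ` of the bi-infinite sequence `a`: the sum of the values of the
continued fractions `[aₙ; aₙ₋₁, …]` and `[0; aₙ₊₁, …]`. -/
def IsLambda (a : ℤ → ℕ) (lam : ℤ → ℝ) : Prop :=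
  ∀ n : ℤ, ∃ ℓL ℓR : ℝ,
    IsCFVal (fun k => (a (n - (k : ℤ)) : ℝ)) ℓL ∧
    IsCFVal (fun k => if k = 0 then 0 else (a (n + (k : ℤ)) : ℝ)) ℓR ∧
    lam n = ℓL + ℓR

open Filter

section ContinuedFraction

variable (b : ℕ → ℝ)

theorem cfP_succ_cfQ_succ (n : ℕ) :
    cfP b (n + 1) =
        (b 0 * (cfP (fun k => b (k + 1)) n).1 + (cfQ (fun k => b (k + 1)) n).1,
          b 0 * (cfP (fun k => b (k + 1)) n).2 + (cfQ (fun k => b (k + 1)) n).2) ∧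
      cfQ b (n + 1) = cfP (fun k => b (k + 1)) n := by
  induction n with
  | zero => constructor <;> ext <;> simp [cfP, cfQ, mul_comm]
  | succ n ih =>
    obtain ⟨hP, hQ⟩ := ih
    constructor
    · rw [cfP, hP, cfP, cfQ]
      refine Prod.ext ?_ rfl
      dsimp only
      ring
    · rw [cfQ, hQ]; rfl

variable {b}

theorem one_le_cfP (hb : ∀ k, 1 ≤ b k) (n : ℕ) : 1 ≤ (cfP b n).1 ∧ 1 ≤ (cfP b n).2 := by
  induction n with
  | zero => simpa [cfP] using hb 0
  | succ n ih =>
    simp only [cfP]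
    constructor <;> nlinarith [hb (n + 1)]

theorem cfConv_succ (hb : ∀ k, 1 ≤ b (k + 1)) (n : ℕ) :
    cfConv b (n + 1) = b 0 + 1 / cfConv (fun k => b (k + 1)) n := by
  have hP : (cfP (fun k => b (k + 1)) n).1 ≠ 0 := by
    linarith [(one_le_cfP hb n).1]
  rw [cfConv, cfConv, (cfP_succ_cfQ_succ b n).1, (cfP_succ_cfQ_succ b n).2, one_div_div]
  field_simp

theorem head_le_cfConv (hb : ∀ k, 1 ≤ b (k + 1)) (n : ℕ) : b 0 ≤ cfConv b n := by
  induction n generalizing b with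
  | zero => simp [cfConv, cfP, cfQ]
  | succ n ih =>
    have htail : 1 ≤ cfConv (fun k => b (k + 1)) n :=
      (hb 0).trans (ih (b := fun k => b (k + 1)) fun k => hb (k + 1))
    rw [cfConv_succ hb]
    have : 0 ≤ 1 / cfConv (fun k => b (k + 1)) n := by positivity
    linarith

theorem cfConv_succ_le (hb : ∀ k, 1 ≤ b (k + 1)) (n : ℕ) :
    cfConv b (n + 1) ≤ b 0 + 1 / b 1 := by
  rw [cfConv_succ hb]
  gcongr
  · exact zero_lt_one.trans_le (hb 0)
  · exact head_le_cfConv (b := fun k => b (k + 1)) (fun k => hb (k + 1)) n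

theorem le_cfConv_add_two (hb : ∀ k, 1 ≤ b (k + 1)) (n : ℕ) :
    b 0 + 1 / (b 1 + 1 / b 2) ≤ cfConv b (n + 2) := by
  have h2 : 0 < b 2 := zero_lt_one.trans_le (hb 1)
  have htail : b 2 ≤ cfConv (fun k => b (k + 2)) n :=
    head_le_cfConv (b := fun k => b (k + 2)) (fun k => hb (k + 2)) n
  have h1 : 0 < b 1 := zero_lt_one.trans_le (hb 0)
  have hc : 0 < cfConv (fun k => b (k + 2)) n := h2.trans_le htail
  rw [cfConv_succ hb, cfConv_succ fun k => hb (k + 1)]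
  gcongr

theorem IsCFVal.le_add_one_div {x : ℝ} (hx : IsCFVal b x) (hb : ∀ k, 1 ≤ b (k + 1)) :
    x ≤ b 0 + 1 / b 1 :=
  le_of_tendsto hx <| eventually_atTop.2 ⟨1, fun n hn => by
    obtain ⟨n, rfl⟩ := Nat.exists_eq_add_of_le' hn
    exact cfConv_succ_le hb n⟩

theorem IsCFVal.add_one_div_le {x : ℝ} (hx : IsCFVal b x) (hb : ∀ k, 1 ≤ b (k + 1)) :
    b 0 + 1 / (b 1 + 1 / b 2) ≤ x :=
  ge_of_tendsto hx <| eventually_atTop.2 ⟨2, fun n hn => by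
    obtain ⟨n, rfl⟩ := Nat.exists_eq_add_of_le' hn
    exact le_cfConv_add_two hb n⟩

end ContinuedFraction

theorem one_div_add_one_div_le {x x' y y' : ℝ} (hx' : 0 ≤ x') (hy : 0 < y) (hx : x' ≤ x)
    (hy' : y ≤ y') : 1 / (x + 1 / y) ≤ 1 / (x' + 1 / y') := by
  have : 0 < y' := hy.trans_le hy'
  gcongr

noncomputable def lambdaTrunc (a : ℤ → ℕ) (m : ℤ) : ℝ :=
  a m + 1 / ((a (m - 1) : ℝ) + 1 / a (m - 2)) + 1 / ((a (m + 1) : ℝ) + 1 / a (m + 2))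

theorem lambdaTrunc_comp_neg (a : ℤ → ℕ) (m : ℤ) :
    lambdaTrunc (fun i => a (-i)) m = lambdaTrunc a (-m) := by
  simp only [lambdaTrunc, neg_sub', neg_add', sub_neg_eq_add]
  ring

section Lambda

variable {a : ℤ → ℕ} {lam : ℤ → ℝ}

theorem IsLambda.lambdaTrunc_le (hlam : IsLambda a lam) (ha : ∀ i, 1 ≤ a i) (m : ℤ) :
    lambdaTrunc a m ≤ lam m := by
  obtain ⟨L, R, hL, hR, hsum⟩ := hlam m
  have hL' := hL.add_one_div_le fun k => by exact_mod_cast ha _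
  have hR' := hR.add_one_div_le fun k => by simpa using ha _
  simp only [CharP.cast_eq_zero, sub_zero, Nat.cast_one, Nat.cast_ofNat, ↓reduceIte, one_ne_zero,
    OfNat.ofNat_ne_zero, zero_add] at hL' hR'
  rw [hsum, lambdaTrunc]
  linarith

theorem IsLambda.le_six (hlam : IsLambda a lam) (hdig : ∀ i, 1 ≤ a i ∧ a i ≤ 4) (m : ℤ) :
    lam m ≤ 6 := by
  obtain ⟨L, R, hL, hR, hsum⟩ := hlam m
  have hL' := hL.le_add_one_div fun k => by exact_mod_cast (hdig _).1
  have hR' := hR.le_add_one_div fun k => by simpa using (hdig _).1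
  simp only [CharP.cast_eq_zero, sub_zero, Nat.cast_one, ↓reduceIte, one_ne_zero, zero_add]
    at hL' hR'
  have h1 (i : ℤ) : 1 / (a i : ℝ) ≤ 1 :=
    div_le_one_of_le₀ (by exact_mod_cast (hdig i).1) (by positivity)
  have h4 : (a m : ℝ) ≤ 4 := by exact_mod_cast (hdig m).2
  linarith [h1 (m - 1), h1 (m + 1)]

theorem three_le_succ_of_eq_four (hdig : ∀ i, 1 ≤ a i ∧ a i ≤ 4) {m : ℤ}
    (hm : lambdaTrunc a m < 4.528) (h4 : a m = 4) : 3 ≤ a (m + 1) := by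
  by_contra! hlt
  have hleft : 1 / ((4 : ℝ) + 1 / 1) ≤ 1 / ((a (m - 1) : ℝ) + 1 / a (m - 2)) :=
    one_div_add_one_div_le (by positivity) one_pos (by exact_mod_cast (hdig _).2)
      (by exact_mod_cast (hdig _).1)
  have hright : 1 / ((2 : ℝ) + 1 / 1) ≤ 1 / ((a (m + 1) : ℝ) + 1 / a (m + 2)) :=
    one_div_add_one_div_le (by positivity) one_pos
      (by exact_mod_cast (by omega : a (m + 1) ≤ 2)) (by exact_mod_cast (hdig _).1)
  rw [lambdaTrunc, h4] at hm
  norm_num at hm hleft hright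
  linarith

theorem not_three_three_four (hdig : ∀ i, 1 ≤ a i ∧ a i ≤ 4)
    (hlow : ∀ m, lambdaTrunc a m < 4.528) (n : ℤ) :
    ¬(a n = 3 ∧ a (n + 1) = 3 ∧ a (n + 2) = 4) := by
  rintro ⟨h3, h3', h4⟩
  have hright : 3 / 13 ≤ 1 / ((a (n + 3) : ℝ) + 1 / a (n + 4)) := by
    have h43 := (hdig (n + 3)).2
    rcases (show a (n + 3) ≤ 3 ∨ a (n + 3) = 4 by omega) with hle | h4'
    · calc (3 : ℝ) / 13 ≤ 1 / (3 + 1 / 1) := by norm_num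
        _ ≤ _ := one_div_add_one_div_le (by positivity) one_pos (by exact_mod_cast hle)
            (by exact_mod_cast (hdig _).1)
    · have h3'' : 3 ≤ a (n + 4) := by
        simpa [add_assoc] using three_le_succ_of_eq_four hdig (hlow (n + 3)) h4'
      calc (3 : ℝ) / 13 = 1 / (4 + 1 / 3) := by norm_num
        _ ≤ _ := one_div_add_one_div_le (by positivity) (by positivity) (by exact_mod_cast h4'.le)
            (by exact_mod_cast h3'')
  have hn := hlow (n + 2)
  rw [lambdaTrunc, show n + 2 - 1 = n + 1 by ring, show n + 2 - 2 = n by ring,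
    show n + 2 + 1 = n + 3 by ring, show n + 2 + 2 = n + 4 by ring, h3, h3', h4] at hn
  norm_num at hn hright
  linarith

end Lambda

/-- Any bi-infinite sequence with digits in `{1,2,3,4}` whose Markov value
`m(a) = ⨆ n, λₙ(a)` is strictly less than `4.528` contains no subword `334` nor its
transpose `433`. -/
theorem stmt_18 (a : ℤ → ℕ) (hdig : ∀ i, 1 ≤ a i ∧ a i ≤ 4)
    (lam : ℤ → ℝ) (hlam : IsLambda a lam)
    (hM : (⨆ n : ℤ, lam n) < 4.528) :
    ∀ n : ℤ, ¬(a n = 3 ∧ a (n + 1) = 3 ∧ a (n + 2) = 4) ∧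
      ¬(a n = 4 ∧ a (n + 1) = 3 ∧ a (n + 2) = 3) := by
  have hbdd : BddAbove (Set.range lam) := ⟨6, Set.forall_mem_range.2 (hlam.le_six hdig)⟩
  have hlow (m : ℤ) : lambdaTrunc a m < 4.528 :=
    (hlam.lambdaTrunc_le (fun i => (hdig i).1) m).trans_lt ((le_ciSup hbdd m).trans_lt hM)
  intro n
  refine ⟨not_three_three_four hdig hlow n, ?_⟩
  rintro ⟨h4, h3, h3'⟩
  -- `4, 3, 3` at `n` is `3, 3, 4` at `-(n + 2)` in the reversed sequence
  refine not_three_three_four (a := fun i => a (-i)) (fun i => hdig _)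
    (fun m => lambdaTrunc_comp_neg a m ▸ hlow _) (-(n + 2)) ⟨?_, ?_, ?_⟩
  · show a (-(-(n + 2))) = 3
    rwa [neg_neg]
  · show a (-(-(n + 2) + 1)) = 3
    rwa [show -(-(n + 2) + 1) = n + 1 by ring]
  · show a (-(-(n + 2) + 2)) = 4
    rwa [show -(-(n + 2) + 2) = n by ring]
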